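/- arXiv:2502.14284 — 5 statements merged into one kernel-verified Lean document; each statement's English description precedes it below -/
import Mathlib

section
/- The MSBDF2 residual satisfies R(h) = O(h^3) as h → 0; that is, there exist constants C > 0 and δ > 0 such that ‖R(h)‖ ≤ C·|h|^3 for all h with |h| ≤ δ. (This establishes that the MSBDF2 scheme, with second-order Adams–Bashforth extrapolation of both the deviatoric term and the cofactor term, is second-order accurate in time.) -/
/-!
Write the residual as `ρ • A(h) - (2h) • F(h)`, where `A(h) = 3 v(t+h) - 4 v(t) + v(t-h)` and
`F(h)` is the extrapolated right-hand side. Both are `C³` in `h`, and `A(0) = 0`. The ODE at `t`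
gives `ρ A'(0) = 2 ρ v'(t) = 2 F(0)`, and the ODE differentiated at `t` gives
`ρ A''(0) = 4 ρ v''(t) = 4 F'(0)`; so the residual and its first two derivatives vanish at `0`.
A `C³` function with this property is `O(|h|³)` on `[-1, 1]`, by applying the mean value
inequality three times, starting from a bound on the continuous third derivative.
-/

section

open Set

variable {E : Type*} [NormedAddCommGroup E] [NormedSpace ℝ E]

theorem norm_le_mul_abs_pow_succ_of_norm_deriv_le {f : ℝ → E} {K r : ℝ} {n : ℕ} (hK : 0 ≤ K)
    (hf : Differentiable ℝ f) (hf0 : f 0 = 0) (hf' : ∀ y, |y| ≤ r → ‖deriv f y‖ ≤ K * |y| ^ n)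
    {x : ℝ} (hx : |x| ≤ r) : ‖f x‖ ≤ K * |x| ^ (n + 1) := by
  have hseg : ∀ y ∈ uIcc 0 x, |y| ≤ |x| := fun y hy => by
    simpa using abs_sub_left_of_mem_uIcc hy
  have hmvt := (convex_uIcc 0 x).norm_image_sub_le_of_norm_deriv_le (fun y _ => hf y)
    (fun y hy => (hf' y ((hseg y hy).trans hx)).trans
      (mul_le_mul_of_nonneg_left (pow_le_pow_left₀ (abs_nonneg y) (hseg y hy) n) hK))
    left_mem_uIcc right_mem_uIcc
  simpa [hf0, pow_succ, mul_assoc] using hmvt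

theorem exists_norm_le_mul_abs_pow_of_iteratedDeriv_eq_zero {n : ℕ} {g : ℝ → E}
    (hg : ContDiff ℝ n g) (hvanish : ∀ k < n, iteratedDeriv k g 0 = 0) :
    ∃ C > 0, ∀ x, |x| ≤ 1 → ‖g x‖ ≤ C * |x| ^ n := by
  induction n generalizing g with
  | zero =>
    obtain ⟨C, hC⟩ := (isCompact_Icc : IsCompact (Icc (-1 : ℝ) 1)).exists_bound_of_continuousOn
      hg.continuous.continuousOn
    exact ⟨max C 1, by positivity, fun x hx => by
      simpa using (hC x (abs_le.mp hx)).trans (le_max_left C 1)⟩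
  | succ n ih =>
    have hg' : ContDiff ℝ n (deriv g) := by
      push_cast at hg
      exact hg.deriv'
    obtain ⟨C, hC, hbound⟩ := ih hg' fun k hk => by
      simpa [iteratedDeriv_succ'] using hvanish (k + 1) (by omega)
    exact ⟨C, hC, fun x hx => norm_le_mul_abs_pow_succ_of_norm_deriv_le hC.le
      (hg.differentiable (by simp)) (by simpa using hvanish 0 (by omega)) hbound hx⟩

theorem exists_norm_sub_smul_le_mul_abs_pow_three {A F : ℝ → E} (c : ℝ)
    (hA : ContDiff ℝ 3 A) (hF : ContDiff ℝ 3 F) (h0 : A 0 = 0) (h1 : deriv A 0 = c • F 0)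
    (h2 : deriv (deriv A) 0 = (2 * c) • deriv F 0) :
    ∃ C > 0, ∀ h, |h| ≤ 1 → ‖A h - (c * h) • F h‖ ≤ C * |h| ^ 3 := by
  set g : ℝ → E := fun h => A h - (c * h) • F h
  have hcx : ∀ x : ℝ, HasDerivAt (fun h => c * h) c x := fun x => by
    simpa using (hasDerivAt_id x).const_mul c
  have hg' : deriv g = fun x => deriv A x - ((c * x) • deriv F x + c • F x) := funext fun x =>
    ((hA.differentiable (by simp) x).hasDerivAt.sub
      ((hcx x).smul (hF.differentiable (by simp) x).hasDerivAt)).deriv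
  have hg'' : deriv (deriv g) 0 = deriv (deriv A) 0 - ((2 * c) • deriv F 0) := by
    have hA' : Differentiable ℝ (deriv A) := (hA.of_le (by norm_num)).differentiable_deriv_two
    have hF' : Differentiable ℝ (deriv F) := (hF.of_le (by norm_num)).differentiable_deriv_two
    rw [hg']
    refine ((hA' 0).hasDerivAt.sub (((hcx 0).smul (hF' 0).hasDerivAt).add
      ((hF.differentiable (by simp) 0).hasDerivAt.const_smul c))).deriv.trans ?_
    module
  refine exists_norm_le_mul_abs_pow_of_iteratedDeriv_eq_zero (g := g) (by fun_prop) fun k hk => ?_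
  interval_cases k
  · simp [g, h0]
  · simp [hg', h1]
  · simp [iteratedDeriv_succ, hg'', h2]

def bdf2Difference (v : ℝ → E) (t h : ℝ) : E := (3 : ℝ) • v (t + h) - (4 : ℝ) • v t + v (t - h)

/-- The right-hand side `P + p • H` at time `t + h` as the MSBDF2 scheme evaluates it: `P` and `H`
are extrapolated from `t` and `t - h` (second-order Adams–Bashforth), `p` is taken at `t + h`. -/
def msbdf2Rhs (P H : ℝ → E) (p : ℝ → ℝ) (t h : ℝ) : E :=
  ((2 : ℝ) • P t - P (t - h)) + p (t + h) • ((2 : ℝ) • H t - H (t - h))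

theorem bdf2Difference_zero (v : ℝ → E) (t : ℝ) : bdf2Difference v t 0 = 0 := by
  rw [bdf2Difference, add_zero, sub_zero]
  module

theorem deriv_bdf2Difference {v : ℝ → E} (hv : Differentiable ℝ v) (t : ℝ) :
    deriv (bdf2Difference v t) = fun h => (3 : ℝ) • deriv v (t + h) - deriv v (t - h) :=
  funext fun h => (((((hv _).hasDerivAt.comp_const_add t h).const_smul (3 : ℝ)).sub_const _).add
    ((hv _).hasDerivAt.comp_const_sub t h)).deriv.trans (sub_eq_add_neg _ _).symm

theorem deriv_bdf2Difference_zero {v : ℝ → E} (hv : Differentiable ℝ v) (t : ℝ) :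
    deriv (bdf2Difference v t) 0 = (2 : ℝ) • deriv v t := by
  rw [deriv_bdf2Difference hv]
  simp only [add_zero, sub_zero]
  module

theorem deriv_deriv_bdf2Difference_zero {v : ℝ → E} (hv : ContDiff ℝ 2 v) (t : ℝ) :
    deriv (deriv (bdf2Difference v t)) 0 = (4 : ℝ) • deriv (deriv v) t := by
  have hv' := hv.differentiable_deriv_two
  rw [deriv_bdf2Difference (hv.differentiable (by simp))]
  refine ((((hv' _).hasDerivAt.comp_const_add t 0).const_smul (3 : ℝ)).sub
    ((hv' _).hasDerivAt.comp_const_sub t 0)).deriv.trans ?_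
  simp only [add_zero, sub_zero]
  module

theorem msbdf2Rhs_zero {ρ : ℝ} {v P H : ℝ → E} {p : ℝ → ℝ}
    (hode : ∀ s, ρ • deriv v s = P s + p s • H s) (t : ℝ) :
    msbdf2Rhs P H p t 0 = ρ • deriv v t := by
  rw [hode, msbdf2Rhs]
  simp only [add_zero, sub_zero]
  module

theorem deriv_msbdf2Rhs_zero {ρ : ℝ} {v P H : ℝ → E} {p : ℝ → ℝ}
    (hode : ∀ s, ρ • deriv v s = P s + p s • H s) (hP : Differentiable ℝ P)
    (hH : Differentiable ℝ H) (hp : Differentiable ℝ p) (t : ℝ) :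
    deriv (msbdf2Rhs P H p t) 0 = ρ • deriv (deriv v) t := by
  have hrhs : HasDerivAt (msbdf2Rhs P H p t) (deriv P t + p t • deriv H t + deriv p t • H t) 0 := by
    have hP' := ((hP _).hasDerivAt.comp_const_sub t 0).const_sub ((2 : ℝ) • P t)
    have hH' := ((hH _).hasDerivAt.comp_const_sub t 0).const_sub ((2 : ℝ) • H t)
    have hp' := (hp _).hasDerivAt.comp_const_add t 0
    refine (hP'.add (hp'.smul hH')).congr_deriv ?_
    simp only [add_zero, sub_zero, neg_neg]
    module
  have hode' : HasDerivAt (ρ • deriv v) (deriv P t + p t • deriv H t + deriv p t • H t) t := by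
    rw [show ρ • deriv v = fun s => P s + p s • H s from funext hode]
    exact ((hP t).hasDerivAt.add ((hp t).hasDerivAt.smul (hH t).hasDerivAt)).congr_deriv (by abel)
  rw [hrhs.deriv, ← deriv_const_smul_field ρ (deriv v), hode'.deriv]

end

theorem msbdf2_residual_isBigO_h_cubed_general
    {E : Type*} [NormedAddCommGroup E] [NormedSpace ℝ E]
    (ρ : ℝ)
    (v P H : ℝ → E) (p : ℝ → ℝ)
    (hv : ContDiff ℝ 3 v) (hP : ContDiff ℝ 3 P) (hH : ContDiff ℝ 3 H)
    (hp : ContDiff ℝ 3 p)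
    (hode : ∀ s : ℝ, ρ • deriv v s = P s + p s • H s)
    (t : ℝ) :
    ∃ C > (0 : ℝ), ∃ δ > (0 : ℝ), ∀ h : ℝ, |h| ≤ δ →
      ‖ρ • ((3 : ℝ) • v (t + h) - (4 : ℝ) • v t + v (t - h)) -
          (2 * h) • (((2 : ℝ) • P t - P (t - h)) +
            p (t + h) • ((2 : ℝ) • H t - H (t - h)))‖ ≤ C * |h| ^ 3 := by
  have hA' : deriv (ρ • bdf2Difference v t) = ρ • deriv (bdf2Difference v t) :=
    funext fun _ => deriv_const_smul_field ρ _
  have hA0 : (ρ • bdf2Difference v t) 0 = 0 := by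
    rw [Pi.smul_apply, bdf2Difference_zero, smul_zero]
  have hA1 : deriv (ρ • bdf2Difference v t) 0 = (2 : ℝ) • msbdf2Rhs P H p t 0 := by
    rw [hA', Pi.smul_apply, deriv_bdf2Difference_zero (hv.differentiable (by simp)),
      msbdf2Rhs_zero hode, smul_comm]
  have hA2 : deriv (deriv (ρ • bdf2Difference v t)) 0 =
      (2 * 2 : ℝ) • deriv (msbdf2Rhs P H p t) 0 := by
    rw [hA', deriv_const_smul_field, deriv_deriv_bdf2Difference_zero (hv.of_le (by norm_num)),
      deriv_msbdf2Rhs_zero hode (hP.differentiable (by simp)) (hH.differentiable (by simp))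
        (hp.differentiable (by simp)), smul_comm]
    norm_num
  obtain ⟨C, hC, hbound⟩ := exists_norm_sub_smul_le_mul_abs_pow_three 2
    (by unfold bdf2Difference; fun_prop) (by unfold msbdf2Rhs; fun_prop) hA0 hA1 hA2
  exact ⟨C, hC, 1, one_pos, hbound⟩

/-- The MSBDF2 residual, obtained by inserting an exact solution of the
semilinear ODE `ρ • v' = P + p • H` into the MSBDF2 scheme (with second-order
Adams–Bashforth extrapolation of both the deviatoric term `P` and the cofactor term `H`),
is `O(h³)` as `h → 0`: there are constants `C > 0` and `δ > 0` with `‖R(h)‖ ≤ C |h|³`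
for all `|h| ≤ δ`. -/
theorem msbdf2_residual_isBigO_h_cubed
    {E : Type*} [NormedAddCommGroup E] [NormedSpace ℝ E]
    (ρ : ℝ) (hρ : 0 < ρ)
    (v P H : ℝ → E) (p : ℝ → ℝ)
    (hv : ContDiff ℝ 3 v) (hP : ContDiff ℝ 3 P) (hH : ContDiff ℝ 3 H)
    (hp : ContDiff ℝ 3 p)
    (hode : ∀ s : ℝ, ρ • deriv v s = P s + p s • H s)
    (t : ℝ) :
    ∃ C > (0 : ℝ), ∃ δ > (0 : ℝ), ∀ h : ℝ, |h| ≤ δ →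
      ‖ρ • ((3 : ℝ) • v (t + h) - (4 : ℝ) • v t + v (t - h)) -
          (2 * h) • (((2 : ℝ) • P t - P (t - h)) +
            p (t + h) • ((2 : ℝ) • H t - H (t - h)))‖ ≤ C * |h| ^ 3 :=
  msbdf2_residual_isBigO_h_cubed_general ρ v P H p hv hP hH hp hode t
end

section
/- The leading-order local truncation error of MSBDF2 is given by the limit lim_{h→0} h^{-3} • R(h) = (ρ/3) • v'''(t) + P''(t) − p''(t) • H(t) − 2·p'(t) • H'(t) + p(t) • H''(t), where primes denote time derivatives evaluated at t. -/
/-!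
Inserting `ρ • v' = P + p • H` at `t` and `t - h`, the residual becomes `ρ` times the residual of
BDF2 with the extrapolated derivative `2 v'(t) - v'(t - h)`, minus
`2h • ((p(t+h) - 2p(t) + p(t-h)) • H(t) + (p(t+h) - p(t-h)) • (H(t) - H(t-h)))`.
Taylor expansion gives `(4/3) h³ v'''(t)` for the first part, and difference quotients give
`2h³ (p'' H + 2 p' H')` for the second. Differentiating the equation twice,
`ρ v''' = P'' + p'' H + 2 p' H' + p H''`, which turns `(4ρ/3) v''' - 2 p'' H - 4 p' H'` into the
stated limit.
-/

open Filter Topology Asymptotics Finset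

section Derivatives
variable {𝕜 E : Type*} [NontriviallyNormedField 𝕜] [NormedAddCommGroup E] [NormedSpace 𝕜 E]
  {f : 𝕜 → E} {f' : E} {t : 𝕜}

theorem HasDerivAt.tendsto_backward_difference (hf : HasDerivAt f f' t) :
    Tendsto (fun h => h⁻¹ • (f t - f (t - h))) (𝓝[≠] 0) (𝓝 f') := by
  have hslope := (HasDerivAt.comp_const_sub t 0 (by rwa [sub_zero])).tendsto_slope_zero
  simpa [← smul_neg] using hslope.neg

theorem HasDerivAt.tendsto_central_difference (hf : HasDerivAt f f' t) :
    Tendsto (fun h => h⁻¹ • (f (t + h) - f (t - h))) (𝓝[≠] 0) (𝓝 ((2 : 𝕜) • f')) := by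
  rw [two_smul]
  refine (hf.tendsto_slope_zero.add hf.tendsto_backward_difference).congr fun h => ?_
  rw [← smul_add, sub_add_sub_cancel]

theorem iteratedDeriv_two_smul {c : 𝕜 → 𝕜} (hc : ContDiff 𝕜 2 c) (hf : ContDiff 𝕜 2 f) (x : 𝕜) :
    iteratedDeriv 2 (fun y => c y • f y) x =
      iteratedDeriv 2 c x • f x + (2 * deriv c x) • deriv f x + c x • iteratedDeriv 2 f x := by
  have hc1 : Differentiable 𝕜 c := hc.differentiable (by norm_num)
  have hf1 : Differentiable 𝕜 f := hf.differentiable (by norm_num)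
  have hc2 : Differentiable 𝕜 (deriv c) := (hc.iterate_deriv' 1 1).differentiable one_ne_zero
  have hf2 : Differentiable 𝕜 (deriv f) := (hf.iterate_deriv' 1 1).differentiable one_ne_zero
  have hderiv : deriv (fun y => c y • f y) = fun y => c y • deriv f y + deriv c y • f y :=
    funext fun y => deriv_smul (hc1 y) (hf1 y)
  have hsecond : HasDerivAt (fun y => c y • deriv f y + deriv c y • f y)
      (c x • deriv (deriv f) x + deriv c x • deriv f x +
        (deriv c x • deriv f x + deriv (deriv c) x • f x)) x :=
    ((hc1 x).hasDerivAt.smul (hf2 x).hasDerivAt).add ((hc2 x).hasDerivAt.smul (hf1 x).hasDerivAt)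
  simp only [iteratedDeriv_succ, iteratedDeriv_zero, hderiv, hsecond.deriv]
  module

end Derivatives

section Taylor
variable {E : Type*} [NormedAddCommGroup E] [NormedSpace ℝ E] {f : ℝ → E} {n : ℕ}

theorem taylor_isLittleO_add (hf : ContDiff ℝ n f) (t : ℝ) :
    (fun h => f (t + h) - ∑ k ∈ range (n + 1), (h ^ k / k.factorial) • iteratedDeriv k f t)
      =o[𝓝 0] (· ^ n) := by
  have hshift : Tendsto (t + ·) (𝓝 0) (𝓝 t) := by
    simpa using (continuous_const_add t).tendsto 0
  simpa [Function.comp_def, taylor_within_apply, iteratedDerivWithin_univ, div_eq_inv_mul]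
    using (taylor_isLittleO_univ (x₀ := t) hf).comp_tendsto hshift

theorem taylor_isLittleO_sub (hf : ContDiff ℝ n f) (t : ℝ) :
    (fun h => f (t - h) - ∑ k ∈ range (n + 1), ((-h) ^ k / k.factorial) • iteratedDeriv k f t)
      =o[𝓝 0] (· ^ n) := by
  have hneg : Tendsto (fun h : ℝ => -h) (𝓝 0) (𝓝 0) := by
    simpa using (continuous_neg (G := ℝ)).tendsto 0
  refine (((taylor_isLittleO_add hf t).comp_tendsto hneg).trans_isBigO
    (isBigO_of_le _ fun h => by simp)).congr_left fun h => ?_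
  simp [sub_eq_add_neg]

theorem tendsto_inv_pow_smul_of_isLittleO {g : ℝ → E} {L : E}
    (hg : (fun h => g h - h ^ n • L) =o[𝓝 0] (· ^ n)) :
    Tendsto (fun h => (h ^ n)⁻¹ • g h) (𝓝[≠] 0) (𝓝 L) := by
  have hlim := ((hg.mono (nhdsWithin_le_nhds (s := {0}ᶜ))).tendsto_inv_smul_nhds_zero).add_const L
  rw [zero_add] at hlim
  refine hlim.congr' ?_
  filter_upwards [self_mem_nhdsWithin] with h (hh : h ≠ 0)
  rw [smul_sub, smul_smul, inv_mul_cancel₀ (pow_ne_zero n hh), one_smul, sub_add_cancel]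

end Taylor

section FiniteDifferences
variable {E : Type*} [NormedAddCommGroup E] [NormedSpace ℝ E] {f : ℝ → E}

theorem tendsto_second_difference (hf : ContDiff ℝ 2 f) (t : ℝ) :
    Tendsto (fun h => (h ^ 2)⁻¹ • (f (t + h) - (2 : ℝ) • f t + f (t - h))) (𝓝[≠] 0)
      (𝓝 (iteratedDeriv 2 f t)) := by
  refine tendsto_inv_pow_smul_of_isLittleO
    (((taylor_isLittleO_add hf t).add (taylor_isLittleO_sub hf t)).congr_left fun h => ?_)
  simp only [sum_range_succ, sum_range_zero, zero_add, Nat.factorial, Nat.cast_succ,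
    iteratedDeriv_zero, iteratedDeriv_one]
  module

theorem tendsto_bdf2_extrapolation_residual (hf : ContDiff ℝ 3 f) (t : ℝ) :
    Tendsto (fun h => (h ^ 3)⁻¹ • ((3 : ℝ) • f (t + h) - (4 : ℝ) • f t + f (t - h)
        - (2 * h) • ((2 : ℝ) • deriv f t - deriv f (t - h))))
      (𝓝[≠] 0) (𝓝 ((4 / 3 : ℝ) • iteratedDeriv 3 f t)) := by
  have hf' : ContDiff ℝ 2 (deriv f) := by simpa using hf.iterate_deriv' 2 1
  have hderiv := (isBigO_refl (fun h : ℝ => h) (𝓝 0)).smul_isLittleO (taylor_isLittleO_sub hf' t)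
  simp only [← iteratedDeriv_succ'] at hderiv
  refine tendsto_inv_pow_smul_of_isLittleO
    (((((taylor_isLittleO_add hf t).const_smul_left (3 : ℝ)).add (taylor_isLittleO_sub hf t)).add
      ((hderiv.const_smul_left (2 : ℝ)).congr_right fun h => by ring)).congr_left fun h => ?_)
  simp only [sum_range_succ, sum_range_zero, zero_add, Pi.smul_apply, Nat.factorial, Nat.cast_succ,
    iteratedDeriv_zero, iteratedDeriv_one]
  module

end FiniteDifferences

section MSBDF2
variable {E : Type*} [NormedAddCommGroup E] [NormedSpace ℝ E] {ρ : ℝ} {v P H : ℝ → E} {p : ℝ → ℝ}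

theorem msbdf2_residual_eq (hode : ∀ s, ρ • deriv v s = P s + p s • H s) (t h : ℝ) :
    ρ • ((3 : ℝ) • v (t + h) - (4 : ℝ) • v t + v (t - h)) -
        (2 * h) • (((2 : ℝ) • P t - P (t - h)) + p (t + h) • ((2 : ℝ) • H t - H (t - h))) =
      ρ • ((3 : ℝ) • v (t + h) - (4 : ℝ) • v t + v (t - h)
          - (2 * h) • ((2 : ℝ) • deriv v t - deriv v (t - h))) -
        (2 * h) • ((p (t + h) - (2 : ℝ) • p t + p (t - h)) • H t +
          (p (t + h) - p (t - h)) • (H t - H (t - h))) := by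
  linear_combination (norm := module) (2 * h) • ((2 : ℝ) • hode t - hode (t - h))

theorem smul_iteratedDeriv_three_of_smul_deriv_eq (hP : ContDiff ℝ 2 P) (hH : ContDiff ℝ 2 H)
    (hp : ContDiff ℝ 2 p)     (hode : ∀ s, ρ • deriv v s = P s + p s • H s) (t : ℝ) :
    ρ • iteratedDeriv 3 v t = iteratedDeriv 2 P t + iteratedDeriv 2 p t • H t
      + (2 * deriv p t) • deriv H t + p t • iteratedDeriv 2 H t := by
  have hF : ρ • deriv v = fun s => P s + p s • H s := funext hode
  rw [iteratedDeriv_succ', ← iteratedDeriv_const_smul_field, hF,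
    iteratedDeriv_fun_add (g := fun s => p s • H s) hP.contDiffAt (hp.smul hH).contDiffAt,
    iteratedDeriv_two_smul hp hH]
  abel

end MSBDF2

theorem msbdf2_leading_truncation_error_general
    {E : Type*} [NormedAddCommGroup E] [NormedSpace ℝ E]
    (ρ : ℝ)
    (v P H : ℝ → E) (p : ℝ → ℝ)
    (hv : ContDiff ℝ 3 v) (hP : ContDiff ℝ 3 P) (hH : ContDiff ℝ 3 H)
    (hp : ContDiff ℝ 3 p)
    (hode : ∀ s : ℝ, ρ • deriv v s = P s + p s • H s)
    (t : ℝ) :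
    Tendsto
      (fun h : ℝ => (h ^ 3)⁻¹ •
        (ρ • ((3 : ℝ) • v (t + h) - (4 : ℝ) • v t + v (t - h)) -
          (2 * h) • (((2 : ℝ) • P t - P (t - h)) +
            p (t + h) • ((2 : ℝ) • H t - H (t - h)))))
      (𝓝[≠] (0 : ℝ))
      (𝓝 ((ρ / 3) • iteratedDeriv 3 v t + iteratedDeriv 2 P t
            - iteratedDeriv 2 p t • H t - (2 * deriv p t) • deriv H t
            + p t • iteratedDeriv 2 H t)) := by
  have hp' : HasDerivAt p (deriv p t) t := (hp.differentiable (by norm_num) t).hasDerivAt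
  have hH' : HasDerivAt H (deriv H t) t := (hH.differentiable (by norm_num) t).hasDerivAt
  have hlim := ((tendsto_bdf2_extrapolation_residual hv t).const_smul ρ).sub
    ((((tendsto_second_difference (hp.of_le (by norm_num)) t).smul_const (H t)).add
      (hp'.tendsto_central_difference.smul hH'.tendsto_backward_difference)).const_smul (2 : ℝ))
  have hρv := smul_iteratedDeriv_three_of_smul_deriv_eq (hP.of_le (by norm_num))
    (hH.of_le (by norm_num)) (hp.of_le (by norm_num)) hode t
  convert hlim.congr' ?_ using 2
  · linear_combination (norm := module) -hρv
  · filter_upwards [self_mem_nhdsWithin] with h (hh : h ≠ 0)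
    rw [msbdf2_residual_eq hode]
    simp only [smul_eq_mul]
    match_scalars <;> field_simp

/-- The leading-order local truncation error of MSBDF2:
`lim_{h→0} h⁻³ • R(h) = (ρ/3) • v'''(t) + P''(t) − p''(t) • H(t) − 2 p'(t) • H'(t) + p(t) • H''(t)`,
where `R(h)` is the MSBDF2 residual of the exact solution of `ρ • v' = P + p • H`. -/
theorem msbdf2_leading_truncation_error
    {E : Type*} [NormedAddCommGroup E] [NormedSpace ℝ E]
    (ρ : ℝ) (hρ : 0 < ρ)
    (v P H : ℝ → E) (p : ℝ → ℝ)
    (hv : ContDiff ℝ 3 v) (hP : ContDiff ℝ 3 P) (hH : ContDiff ℝ 3 H)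
    (hp : ContDiff ℝ 3 p)
    (hode : ∀ s : ℝ, ρ • deriv v s = P s + p s • H s)
    (t : ℝ) :
    Tendsto
      (fun h : ℝ => (h ^ 3)⁻¹ •
        (ρ • ((3 : ℝ) • v (t + h) - (4 : ℝ) • v t + v (t - h)) -
          (2 * h) • (((2 : ℝ) • P t - P (t - h)) +
            p (t + h) • ((2 : ℝ) • H t - H (t - h)))))
      (𝓝[≠] (0 : ℝ))
      (𝓝 ((ρ / 3) • iteratedDeriv 3 v t + iteratedDeriv 2 P t
            - iteratedDeriv 2 p t • H t - (2 * deriv p t) • deriv H t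
            + p t • iteratedDeriv 2 H t)) :=
  msbdf2_leading_truncation_error_general ρ v P H p hv hP hH hp hode t
end

section
/- The FEBDF2 residual satisfies R(h) = O(h^3) as h → 0; that is, there exist constants C > 0 and δ > 0 such that ‖R(h)‖ ≤ C·|h|^3 for all h with |h| ≤ δ. (This establishes that the FEBDF2 scheme, whose forcing terms are evaluated at the forward-Euler predictor u* = u(t) + h·v(t), is second-order accurate in time.) -/
/-!
Write `R(h) = ρ • τ(h) + 2h • D(h)`, where `τ(h) = 3 v(t+h) - 4 v(t) + v(t-h) - 2h v'(t+h)` is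
the truncation error of BDF2 and `D(h)` is the difference of the forcing `P + p H` at the exact
state `u(t+h)` and at the predictor `u(t) + h v(t)`; this uses the ODE to replace `ρ v'(t+h)` by
the forcing at `u(t+h)`. The function `τ` vanishes at `0`, so does its derivative
`τ'(h) = v'(t+h) - v'(t-h) - 2h v''(t+h)`, and `τ''(h) = v''(t-h) - v''(t+h) - 2h v'''(t+h)` is
`O(h)`; applying the mean value inequality twice gives `τ = O(h³)`. The predictor error is
`O(h²)` by the same argument, and `P`, `H` are `C¹`, hence locally Lipschitz, so `D = O(h²)`.
-/

open Asymptotics Filter Topology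

section

variable {𝕜 E F : Type*} [NontriviallyNormedField 𝕜] [NormedAddCommGroup E] [NormedSpace 𝕜 E]
  [NormedAddCommGroup F] [NormedSpace 𝕜 F]

theorem DifferentiableAt.isBigO_sub_comp_const_add {f : 𝕜 → E} {t : 𝕜}
    (hf : DifferentiableAt 𝕜 f t) : (fun h => f (t + h) - f t) =O[𝓝 0] fun h => h := by
  have hlim : Tendsto (fun h : 𝕜 => t + h) (𝓝 0) (𝓝 t) := by
    simpa using (continuous_const_add t).tendsto 0
  simpa [Function.comp_def] using hf.hasDerivAt.isBigO_sub.comp_tendsto hlim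

theorem DifferentiableAt.isBigO_sub_comp_const_sub {f : 𝕜 → E} {t : 𝕜}
    (hf : DifferentiableAt 𝕜 f t) : (fun h => f (t - h) - f t) =O[𝓝 0] fun h => h := by
  have hlim : Tendsto (fun h : 𝕜 => t - h) (𝓝 0) (𝓝 t) := by
    simpa using (continuous_sub_left t).tendsto 0
  refine (isBigO_neg_right (g' := fun h : 𝕜 => h)).mp ?_
  simpa [Function.comp_def] using hf.hasDerivAt.isBigO_sub.comp_tendsto hlim

theorem HasStrictFDerivAt.isBigO_comp_sub_comp {α : Type*} {l : Filter α} {g : E → F}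
    {g' : E →L[𝕜] F} {x : E} (hg : HasStrictFDerivAt g g' x) {a b : α → E}
    (ha : Tendsto a l (𝓝 x)) (hb : Tendsto b l (𝓝 x)) :
    (fun y => g (a y) - g (b y)) =O[l] fun y => a y - b y :=
  hg.isBigO_sub.comp_tendsto (ha.prodMk_nhds hb)

end

section

variable {E : Type*} [NormedAddCommGroup E] [NormedSpace ℝ E]

theorem isBigO_pow_succ_of_hasDerivAt {f f' : ℝ → E} {n : ℕ}
    (hf : ∀ᶠ s in 𝓝 0, HasDerivAt f (f' s) s) (hf0 : f 0 = 0)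
    (hf' : f' =O[𝓝 0] fun s => s ^ n) :
    f =O[𝓝 0] fun s => s ^ (n + 1) := by
  obtain ⟨C, hC0, hC⟩ := hf'.exists_nonneg
  obtain ⟨ε, hε, hball⟩ := Metric.eventually_nhds_iff_ball.mp (hf.and hC.bound)
  refine IsBigO.of_bound C ?_
  filter_upwards [Metric.ball_mem_nhds 0 hε] with h hh
  have hsub : Metric.closedBall (0 : ℝ) ‖h‖ ⊆ Metric.ball 0 ε :=
    Metric.closedBall_subset_ball (mem_ball_zero_iff.mp hh)
  have hbound : ∀ s ∈ Metric.closedBall (0 : ℝ) ‖h‖, ‖f' s‖ ≤ C * ‖h‖ ^ n := fun s hs => by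
    calc ‖f' s‖ ≤ C * ‖s ^ n‖ := (hball s (hsub hs)).2
      _ ≤ C * ‖h‖ ^ n := by
        rw [norm_pow]; gcongr; exact mem_closedBall_zero_iff.mp hs
  have hmvt := (convex_closedBall (0 : ℝ) ‖h‖).norm_image_sub_le_of_norm_hasDerivWithin_le
    (fun s hs => (hball s (hsub hs)).1.hasDerivWithinAt) hbound
    (Metric.mem_closedBall_self (norm_nonneg h)) (mem_closedBall_zero_iff.mpr le_rfl)
  calc ‖f h‖ ≤ C * ‖h‖ ^ n * ‖h‖ := by simpa [hf0] using hmvt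
    _ = C * ‖h ^ (n + 1)‖ := by rw [norm_pow, pow_succ, mul_assoc]

theorem isBigO_forward_euler_error {u v : ℝ → E} {t : ℝ} (hu : ∀ s, HasDerivAt u (v s) s)
    (hv : DifferentiableAt ℝ v t) :
    (fun h => u (t + h) - (u t + h • v t)) =O[𝓝 0] fun h => h ^ 2 := by
  refine isBigO_pow_succ_of_hasDerivAt (f' := fun h => v (t + h) - v t) (n := 1)
    (Eventually.of_forall fun h => ?_) (by simp) (by simpa using hv.isBigO_sub_comp_const_add)
  simpa using ((hu (t + h)).comp_const_add t h).fun_sub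
    (((hasDerivAt_id' h).smul_const (v t)).const_add (u t))

theorem isBigO_bdf2_truncation {w : ℝ → E} (hw : ContDiff ℝ 3 w) (t : ℝ) :
    (fun h => (3 : ℝ) • w (t + h) - (4 : ℝ) • w t + w (t - h) - (2 * h) • deriv w (t + h))
      =O[𝓝 0] fun h => h ^ 3 := by
  set w₁ := deriv w
  set w₂ := deriv w₁
  set w₃ := deriv w₂
  have hw₁ : ContDiff ℝ 2 w₁ := hw.deriv'
  have hw₂ : ContDiff ℝ 1 w₂ := hw₁.deriv'
  have hdw : ∀ s, HasDerivAt w (w₁ s) s := fun s =>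
    (hw.differentiable (by norm_num) s).hasDerivAt
  have hdw₁ : ∀ s, HasDerivAt w₁ (w₂ s) s := fun s =>
    (hw₁.differentiable (by norm_num) s).hasDerivAt
  have hdw₂ : ∀ s, HasDerivAt w₂ (w₃ s) s := fun s =>
    (hw₂.differentiable one_ne_zero s).hasDerivAt
  have hw₃ : Tendsto (fun h => w₃ (t + h)) (𝓝 0) (𝓝 (w₃ t)) := by
    simpa [Function.comp_def] using
      ((hw₂.continuous_deriv le_rfl).comp (continuous_const_add t)).tendsto 0
  have hτ₂ : (fun h => w₂ (t - h) - w₂ (t + h) - (2 * h) • w₃ (t + h)) =O[𝓝 0]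
      fun h => h ^ 1 := by
    have hlast : (fun h => (2 * h) • w₃ (t + h)) =O[𝓝 0] fun h => h := by
      simpa using ((isBigO_refl (fun h : ℝ => h) _).const_mul_left 2).smul (hw₃.isBigO_one ℝ)
    simpa using (((hdw₂ t).differentiableAt.isBigO_sub_comp_const_sub).sub
      (hdw₂ t).differentiableAt.isBigO_sub_comp_const_add).sub hlast
  have hτ₁ : (fun h => w₁ (t + h) - w₁ (t - h) - (2 * h) • w₂ (t + h)) =O[𝓝 0]
      fun h => h ^ 2 := by
    refine isBigO_pow_succ_of_hasDerivAt (Eventually.of_forall fun h => ?_) (by simp) hτ₂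
    convert (((hdw₁ (t + h)).comp_const_add t h).fun_sub
      ((hdw₁ (t - h)).comp_const_sub t h)).fun_sub
      (((hasDerivAt_id' h).const_mul 2).fun_smul ((hdw₂ (t + h)).comp_const_add t h)) using 1
    module
  refine isBigO_pow_succ_of_hasDerivAt (Eventually.of_forall fun h => ?_) (by simp; module) hτ₁
  convert (((((hdw (t + h)).comp_const_add t h).fun_const_smul (3 : ℝ)).sub_const
    ((4 : ℝ) • w t)).fun_add ((hdw (t - h)).comp_const_sub t h)).fun_sub
    (((hasDerivAt_id' h).const_mul 2).fun_smul ((hdw₁ (t + h)).comp_const_add t h)) using 1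
  module

end

theorem exists_bound_of_isBigO_pow_nhds_zero {E : Type*} [Norm E] {f : ℝ → E} {n : ℕ}
    (hf : f =O[𝓝 0] fun h => h ^ n) :
    ∃ C > (0 : ℝ), ∃ δ > (0 : ℝ), ∀ h : ℝ, |h| ≤ δ → ‖f h‖ ≤ C * |h| ^ n := by
  obtain ⟨C, hC, hCf⟩ := hf.exists_pos
  obtain ⟨ε, hε, hball⟩ := Metric.eventually_nhds_iff_ball.mp hCf.bound
  refine ⟨C, hC, ε / 2, half_pos hε, fun h hh => ?_⟩
  simpa using hball h (mem_ball_zero_iff.mpr (by rw [Real.norm_eq_abs]; linarith))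

theorem febdf2_residual_isBigO_h_cubed_general
    {E : Type*} [NormedAddCommGroup E] [NormedSpace ℝ E]
    (ρ : ℝ)
    (P H : E → E) (p : ℝ → ℝ) (u : ℝ → E)
    (hP : ContDiff ℝ 3 P) (hH : ContDiff ℝ 3 H) (hp : ContDiff ℝ 3 p)
    (hu : ContDiff ℝ 4 u)
    (v : ℝ → E) (hv : v = deriv u)
    (hode : ∀ s : ℝ, ρ • deriv v s = P (u s) + p s • H (u s))
    (t : ℝ) :
    ∃ C > (0 : ℝ), ∃ δ > (0 : ℝ), ∀ h : ℝ, |h| ≤ δ →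
      ‖ρ • ((3 : ℝ) • v (t + h) - (4 : ℝ) • v t + v (t - h)) -
          (2 * h) • (P (u t + h • v t) + p (t + h) • H (u t + h • v t))‖ ≤ C * |h| ^ 3 := by
  have hv₃ : ContDiff ℝ 3 v := hv ▸ hu.deriv'
  have hu' : ∀ s, HasDerivAt u (v s) s := fun s =>
    hv ▸ (hu.differentiable (by norm_num) s).hasDerivAt
  have hexact : Tendsto (fun h => u (t + h)) (𝓝 0) (𝓝 (u t)) := by
    simpa [Function.comp_def] using (hu.continuous.comp (continuous_const_add t)).tendsto 0
  have hpredictor : Tendsto (fun h : ℝ => u t + h • v t) (𝓝 0) (𝓝 (u t)) := by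
    simpa using ((continuous_id.smul continuous_const).const_add (u t)).tendsto (0 : ℝ)
  have hp₁ : (fun h => p (t + h)) =O[𝓝 0] fun _ => (1 : ℝ) := by
    refine Tendsto.isBigO_one ℝ (c := p t) ?_
    simpa [Function.comp_def] using (hp.continuous.comp (continuous_const_add t)).tendsto 0
  have hforcing : (fun h => (P (u (t + h)) - P (u t + h • v t)) +
      p (t + h) • (H (u (t + h)) - H (u t + h • v t))) =O[𝓝 0] fun h => h ^ 2 := by
    have hP' := (hP.contDiffAt.hasStrictFDerivAt (by norm_num)).isBigO_comp_sub_comp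
      hexact hpredictor
    have hH' := hp₁.smul ((hH.contDiffAt.hasStrictFDerivAt (by norm_num)).isBigO_comp_sub_comp
      hexact hpredictor)
    exact (hP'.add (by simpa using hH')).trans
      (isBigO_forward_euler_error hu' (hv₃.differentiable (by norm_num) t))
  have h2h : (fun h : ℝ => 2 * h) =O[𝓝 0] fun h => h := (isBigO_refl _ _).const_mul_left 2
  refine exists_bound_of_isBigO_pow_nhds_zero
    ((((isBigO_bdf2_truncation hv₃ t).const_smul_left ρ).add
      ((h2h.smul hforcing).congr_right fun h => by simp [smul_eq_mul, pow_succ'])).congr_left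
      fun h => ?_)
  rw [Pi.smul_apply, smul_sub, smul_comm ρ (2 * h), hode]
  module

/-- The FEBDF2 residual, obtained by inserting an exact solution of
`ρ • v' = P(u) + p • H(u)` (with `v = u'`) into the FEBDF2 scheme whose forcing terms are
evaluated at the forward-Euler predictor `u* = u(t) + h • v(t)`, is `O(h³)` as `h → 0`. -/
theorem febdf2_residual_isBigO_h_cubed
    {E : Type*} [NormedAddCommGroup E] [NormedSpace ℝ E]
    (ρ : ℝ) (hρ : 0 < ρ)
    (P H : E → E) (p : ℝ → ℝ) (u : ℝ → E)
    (hP : ContDiff ℝ 3 P) (hH : ContDiff ℝ 3 H) (hp : ContDiff ℝ 3 p)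
    (hu : ContDiff ℝ 4 u)
    (v : ℝ → E) (hv : v = deriv u)
    (hode : ∀ s : ℝ, ρ • deriv v s = P (u s) + p s • H (u s))
    (t : ℝ) :
    ∃ C > (0 : ℝ), ∃ δ > (0 : ℝ), ∀ h : ℝ, |h| ≤ δ →
      ‖ρ • ((3 : ℝ) • v (t + h) - (4 : ℝ) • v t + v (t - h)) -
          (2 * h) • (P (u t + h • v t) + p (t + h) • H (u t + h • v t))‖ ≤ C * |h| ^ 3 :=
  febdf2_residual_isBigO_h_cubed_general ρ P H p u hP hH hp hu v hv hode t
end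

section
/- If the Adams–Bashforth extrapolation of the cofactor term is omitted in MSBDF2, i.e. one considers the modified residual R̂(h) = ρ • (3·v(t+h) − 4·v(t) + v(t−h)) − 2h • ( (2·P(t) − P(t−h)) + p(t+h) • H(t) ), then lim_{h→0} h^{-2} • R̂(h) = 2·p(t) • H'(t). In particular, whenever p(t) • H'(t) ≠ 0 the residual is of exact order h^2, so the scheme degrades to first-order accuracy without the cofactor extrapolation. -/
/-!
The BDF2 stencil satisfies `3 v(t+h) - 4 v(t) + v(t-h) = 2h v'(t) + 2h² v''(t) + o(h²)`, while
the forcing `2 P(t) - P(t-h) + p(t+h) H(t)` equals `(P + pH)(t) + h (P' + p'H)(t) + o(h)`. The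
`O(h)` terms of the residual cancel by the equation `ρ v' = P + pH`; at order `h²` the
differentiated equation `ρ v'' = P' + p'H + pH'` leaves exactly `2 p H'`, the term that the
extrapolation `2 H(t) - H(t-h)` would have cancelled.
-/

open Filter Topology

section

variable {E : Type*} [NormedAddCommGroup E] [NormedSpace ℝ E]

theorem tendsto_inv_sq_smul_of_hasDerivAt_zero {f f' : ℝ → E} {c : E}
    (hf : ∀ x, HasDerivAt f (f' x) x) (hf₀ : f 0 = 0) (hf'₀ : f' 0 = 0)
    (hf' : HasDerivAt f' c 0) :
    Tendsto (fun h : ℝ => (h ^ 2)⁻¹ • f h) (𝓝[≠] 0) (𝓝 ((2 : ℝ)⁻¹ • c)) := by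
  have hg' : (fun x : ℝ => f' x - x • c) =o[𝓝[Set.univ] 0] fun x => (x - 0) ^ 1 := by
    simpa [hf'₀] using hasDerivAt_iff_isLittleO.mp hf'
  have hg : ∀ x, HasDerivAt (fun y : ℝ => f y - (y ^ 2 / 2) • c) (f' x - x • c) x := fun x => by
    have hsq : HasDerivAt (fun y : ℝ => y ^ 2 / 2) x x := by
      simpa using (hasDerivAt_pow 2 x).div_const 2
    exact (hf x).sub (hsq.smul_const c)
  have hg_small := convex_univ.isLittleO_pow_succ_real (Set.mem_univ 0)
    (fun x _ => (hg x).hasDerivWithinAt) hg'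
  simp only [nhdsWithin_univ, hf₀, sub_zero, zero_pow two_ne_zero, zero_div, zero_smul] at hg_small
  have hlim : Tendsto (fun h : ℝ => (2 : ℝ)⁻¹ • c + (h ^ 2)⁻¹ • (f h - (h ^ 2 / 2) • c))
      (𝓝[≠] 0) (𝓝 ((2 : ℝ)⁻¹ • c)) := by
    simpa using (hg_small.tendsto_inv_smul_nhds_zero.mono_left nhdsWithin_le_nhds).const_add
      ((2 : ℝ)⁻¹ • c)
  refine hlim.congr' (eventually_nhdsWithin_of_forall fun h (hh : h ≠ 0) => ?_)
  rw [smul_sub, smul_smul]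
  field_simp
  abel

theorem tendsto_bdf2_stencil {v v' : ℝ → E} {a : E} {t : ℝ}
    (hv : ∀ s, HasDerivAt v (v' s) s) (hv' : HasDerivAt v' a t) :
    Tendsto (fun h : ℝ => (h ^ 2)⁻¹ •
        ((3 : ℝ) • v (t + h) - (4 : ℝ) • v t + v (t - h) - (2 * h) • v' t))
      (𝓝[≠] 0) (𝓝 ((2 : ℝ) • a)) := by
  have hd : ∀ h : ℝ, HasDerivAt
      (fun h : ℝ => (3 : ℝ) • v (t + h) - (4 : ℝ) • v t + v (t - h) - (2 * h) • v' t)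
      ((3 : ℝ) • v' (t + h) - v' (t - h) - (2 : ℝ) • v' t) h := fun h => by
    have := ((((hv (t + h)).comp_const_add t h).const_smul (3 : ℝ)).sub_const ((4 : ℝ) • v t)).add
      ((hv (t - h)).comp_const_sub t h) |>.sub (((hasDerivAt_id h).const_mul 2).smul_const (v' t))
    exact this.congr_deriv (by module)
  have hd₂ : HasDerivAt (fun h : ℝ => (3 : ℝ) • v' (t + h) - v' (t - h) - (2 : ℝ) • v' t)
      ((4 : ℝ) • a) 0 := by
    have hfwd : HasDerivAt v' a (t + 0) := by rwa [add_zero]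
    have hbwd : HasDerivAt v' a (t - 0) := by rwa [sub_zero]
    exact (((hfwd.comp_const_add t 0).const_smul (3 : ℝ)).sub (hbwd.comp_const_sub t 0)
      |>.sub_const ((2 : ℝ) • v' t)).congr_deriv (by module)
  convert tendsto_inv_sq_smul_of_hasDerivAt_zero hd (by simp; module) (by simp; module) hd₂ using 2
  module

end

theorem msbdf2_without_cofactor_extrapolation_first_order_general
    {E : Type*} [NormedAddCommGroup E] [NormedSpace ℝ E]
    (ρ : ℝ)
    (v P H : ℝ → E) (p : ℝ → ℝ)
    (hv : ContDiff ℝ 3 v) (hP : ContDiff ℝ 3 P) (hH : ContDiff ℝ 3 H)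
    (hp : ContDiff ℝ 3 p)
    (hode : ∀ s : ℝ, ρ • deriv v s = P s + p s • H s)
    (t : ℝ) :
    Tendsto
      (fun h : ℝ => (h ^ 2)⁻¹ •
        (ρ • ((3 : ℝ) • v (t + h) - (4 : ℝ) • v t + v (t - h)) -
          (2 * h) • (((2 : ℝ) • P t - P (t - h)) + p (t + h) • H t)))
      (𝓝[≠] (0 : ℝ))
      (𝓝 ((2 * p t) • deriv H t)) := by
  have hv₁ (s : ℝ) : HasDerivAt v (deriv v s) s := (hv.differentiable (by simp) s).hasDerivAt
  have hv₂ (s : ℝ) : HasDerivAt (deriv v) (deriv (deriv v) s) s :=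
    ((hv.deriv' (n := 2)).differentiable (by simp) s).hasDerivAt
  have hP₁ (s : ℝ) : HasDerivAt P (deriv P s) s := (hP.differentiable (by simp) s).hasDerivAt
  have hH₁ (s : ℝ) : HasDerivAt H (deriv H s) s := (hH.differentiable (by simp) s).hasDerivAt
  have hp₁ (s : ℝ) : HasDerivAt p (deriv p s) s := (hp.differentiable (by simp) s).hasDerivAt
  have hode' : ρ • deriv (deriv v) t = deriv P t + (p t • deriv H t + deriv p t • H t) := by
    have hrhs : HasDerivAt (fun s => ρ • deriv v s)
        (deriv P t + (p t • deriv H t + deriv p t • H t)) t := by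
      simp only [hode]
      exact (hP₁ t).add ((hp₁ t).smul (hH₁ t))
    exact ((hv₂ t).const_smul ρ).unique hrhs
  have hforcing : HasDerivAt (fun h : ℝ => (2 : ℝ) • P t - P (t - h) + p (t + h) • H t)
      (deriv P t + deriv p t • H t) 0 := by
    have hfwd : HasDerivAt p (deriv p t) (t + 0) := by rw [add_zero]; exact hp₁ t
    have hbwd : HasDerivAt P (deriv P t) (t - 0) := by rw [sub_zero]; exact hP₁ t
    exact (((hbwd.comp_const_sub t 0).const_sub _).add
      ((hfwd.comp_const_add t 0).smul_const (H t))).congr_deriv (by rw [neg_neg])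
  have hlim := ((tendsto_bdf2_stencil hv₁ (hv₂ t)).const_smul ρ).sub
    (hforcing.tendsto_slope_zero.const_smul (2 : ℝ))
  rw [show (2 * p t) • deriv H t =
      ρ • (2 : ℝ) • deriv (deriv v) t - (2 : ℝ) • (deriv P t + deriv p t • H t) by
    linear_combination (norm := module) (-2 : ℝ) • hode']
  -- for `h ≠ 0` the two `h⁻¹`-terms, `ρ v'(t)` and `(P + pH)(t)`, cancel by `hode t`
  refine hlim.congr' (eventually_nhdsWithin_of_forall fun h (hh : h ≠ 0) => ?_)
  simp only [zero_add, sub_zero, add_zero]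
  linear_combination (norm := skip) (-2 * h⁻¹) • hode t
  match_scalars <;> field_simp <;> ring

/-- If the Adams–Bashforth extrapolation of the cofactor term is omitted in
MSBDF2, the modified residual
`R̂(h) = ρ • (3 v(t+h) − 4 v(t) + v(t−h)) − 2h • ((2 P(t) − P(t−h)) + p(t+h) • H(t))`
satisfies `lim_{h→0} h⁻² • R̂(h) = 2 p(t) • H'(t)`; hence whenever `p(t) • H'(t) ≠ 0` the
residual is of exact order `h²` and the scheme degrades to first-order accuracy. -/
theorem msbdf2_without_cofactor_extrapolation_first_order
    {E : Type*} [NormedAddCommGroup E] [NormedSpace ℝ E]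
    (ρ : ℝ) (hρ : 0 < ρ)
    (v P H : ℝ → E) (p : ℝ → ℝ)
    (hv : ContDiff ℝ 3 v) (hP : ContDiff ℝ 3 P) (hH : ContDiff ℝ 3 H)
    (hp : ContDiff ℝ 3 p)
    (hode : ∀ s : ℝ, ρ • deriv v s = P s + p s • H s)
    (t : ℝ) :
    Tendsto
      (fun h : ℝ => (h ^ 2)⁻¹ •
        (ρ • ((3 : ℝ) • v (t + h) - (4 : ℝ) • v t + v (t - h)) -
          (2 * h) • (((2 : ℝ) • P t - P (t - h)) + p (t + h) • H t)))
      (𝓝[≠] (0 : ℝ))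
      (𝓝 ((2 * p t) • deriv H t)) :=
  msbdf2_without_cofactor_extrapolation_first_order_general ρ v P H p hv hP hH hp hode t
end

section
/- For every t ∈ ℝ, the BDF2 difference quotient satisfies lim_{h→0, h≠0} h^{-2} • ( (2h)^{-1} • (3·y(t+h) − 4·y(t) + y(t−h)) − y'(t+h) ) = −(1/3) • y'''(t). That is, the BDF2 formula approximates the derivative at the new time level t+h with leading error −(h²/3)·y'''. -/
/-!
Expand `y (t ± h)` to third order and `y' (t + h)` to second order about `t`, with Peano
remainders. On the Taylor polynomials the BDF2 combination is exact up to `-(h² / 3) • y''' t`,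
and after division by `h²` each remainder term is `o(1)`.
-/

open Filter Topology Finset Nat

theorem tendsto_taylor_remainder_div_pow {E : Type*} [NormedAddCommGroup E] [NormedSpace ℝ E]
    {f : ℝ → E} {n : ℕ} (hf : ContDiff ℝ n f) (x : ℝ) :
    Tendsto (fun h : ℝ => (h ^ n)⁻¹ •
        (f (x + h) - ∑ k ∈ range (n + 1), (h ^ k / k !) • iteratedDeriv k f x))
      (𝓝 0) (𝓝 0) := by
  have hshift : Tendsto (x + ·) (𝓝 (0 : ℝ)) (𝓝 x) := by
    simpa using (continuous_const_add x).tendsto 0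
  have htaylor := (taylor_tendsto convex_univ (Set.mem_univ x) hf.contDiffOn).comp
    (nhdsWithin_univ x ▸ hshift)
  simpa [Function.comp_def, taylor_within_apply, iteratedDerivWithin_univ, div_eq_inv_mul]
    using htaylor

theorem bdf2_quotient_eq_taylor_remainders {E : Type*} [AddCommGroup E] [Module ℝ E]
    (c : ℕ → E) {h : ℝ} (hh : h ≠ 0) (yp ym d : E) :
    (h ^ 2)⁻¹ • ((2 * h)⁻¹ • ((3 : ℝ) • yp - (4 : ℝ) • c 0 + ym) - d) =
      (3 / 2 : ℝ) • ((h ^ 3)⁻¹ • (yp - ∑ k ∈ range 4, (h ^ k / k !) • c k))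
      - (1 / 2 : ℝ) • (((-h) ^ 3)⁻¹ • (ym - ∑ k ∈ range 4, ((-h) ^ k / k !) • c k))
      - (h ^ 2)⁻¹ • (d - ∑ k ∈ range 3, (h ^ k / k !) • c (k + 1))
      - (1 / 3 : ℝ) • c 3 := by
  simp only [sum_range_succ, sum_range_zero, factorial]
  match_scalars <;> field_simp <;> ring

/-- The BDF2 difference quotient approximates the derivative at the new
time level `t + h` with leading error `−(h²/3) y'''(t)`:
`lim_{h→0, h≠0} h⁻² • ((2h)⁻¹ • (3 y(t+h) − 4 y(t) + y(t−h)) − y'(t+h)) = −(1/3) • y'''(t)`. -/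
theorem bdf2_difference_quotient_leading_error
    {E : Type*} [NormedAddCommGroup E] [NormedSpace ℝ E]
    (y : ℝ → E) (hy : ContDiff ℝ 3 y) :
    ∀ t : ℝ,
      Tendsto
        (fun h : ℝ => (h ^ 2)⁻¹ •
          ((2 * h)⁻¹ • ((3 : ℝ) • y (t + h) - (4 : ℝ) • y t + y (t - h)) - deriv y (t + h)))
        (𝓝[≠] (0 : ℝ))
        (𝓝 (-(1 / 3 : ℝ) • iteratedDeriv 3 y t)) := by
  intro t
  have hneg : Tendsto (fun h : ℝ => -h) (𝓝 0) (𝓝 0) := by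
    simpa using (continuous_neg (G := ℝ)).tendsto 0
  have hforward := tendsto_taylor_remainder_div_pow hy t
  have hbackward := hforward.comp hneg
  have hderiv := tendsto_taylor_remainder_div_pow (hy.deriv' (n := 2)) t
  simp only [← iteratedDeriv_succ'] at hderiv
  have hcombined := (((hforward.const_smul (3 / 2 : ℝ)).sub
    (hbackward.const_smul (1 / 2 : ℝ))).sub hderiv).sub_const ((1 / 3 : ℝ) • iteratedDeriv 3 y t)
  rw [smul_zero, smul_zero, sub_zero, sub_zero, zero_sub, ← neg_smul] at hcombined
  refine (hcombined.mono_left nhdsWithin_le_nhds).congr' ?_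
  filter_upwards [self_mem_nhdsWithin] with h hh
  have hsplit := bdf2_quotient_eq_taylor_remainders (iteratedDeriv · y t) hh
    (y (t + h)) (y (t + -h)) (deriv y (t + h))
  rw [iteratedDeriv_zero] at hsplit
  rw [sub_eq_add_neg t h, hsplit, Function.comp_apply]
end
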